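/- Shasha–Zhang recurrence for forest similarity: sim(F, F') = 0 if F or F' is empty, and otherwise sim(F,F') = max{ sim(F∖v_1, F'), sim(F, F'∖v_1'), sim(F∖sub(v_1), F'∖sub(v_1')) + sim(sub(v_1), sub(v_1')) }, where v_1, v_1' are the first nodes in the pre-orders of F, F'. -/

import Mathlib

namespace Stmt12

/-- A rooted ordered tree with labels in `α`. -/
inductive LTree (α : Type*) : Type _ where
  | node : α → List (LTree α) → LTree α

/-- An ordered forest. -/
abbrev LForest (α : Type*) := List (LTree α)

mutual
/-- Number of nodes of a tree. -/
def sizeT {α : Type*} : LTree α → ℕ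
  | .node _ ts => 1 + sizeF ts
/-- Number of nodes of a forest. -/
def sizeF {α : Type*} : LForest α → ℕ
  | [] => 0
  | t :: ts => sizeT t + sizeF ts
end

/-- The label of the node of `F` at address `p` (a path of child indices),
if it exists. -/
def labelAt {α : Type*} : LForest α → List ℕ → Option α
  | _, [] => none
  | ts, i :: p =>
    match ts[i]? with
    | none => none
    | some (.node a us) => if p = [] then some a else labelAt us p
termination_by _ p => p.length

/-- `p` is (the address of) a node of the forest `F`. -/
def IsNode {α : Type*} (F : LForest α) (p : List ℕ) : Prop := (labelAt F p).isSome

/-- Two matched pairs of node addresses are compatible: distinct nodes,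
ancestor (address-prefix) relations preserved in both directions, and for
incomparable nodes the pre-order (lexicographic) order is preserved. -/
def Compat (pp qq : List ℕ × List ℕ) : Prop :=
  pp.1 ≠ qq.1 ∧ pp.2 ≠ qq.2 ∧
  (pp.1 <+: qq.1 ↔ pp.2 <+: qq.2) ∧
  (qq.1 <+: pp.1 ↔ qq.2 <+: pp.2) ∧
  (List.Lex (· < ·) pp.1 qq.1 ↔ List.Lex (· < ·) pp.2 qq.2)

/-- A valid similarity mapping between the forests `F` and `F'`. -/
def IsMappingF {α : Type*} (F F' : LForest α) (M : List (List ℕ × List ℕ)) : Prop :=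
  (∀ pr ∈ M, IsNode F pr.1 ∧ IsNode F' pr.2) ∧ M.Pairwise Compat

/-- Total weight of a mapping under the weight function `η` on labels. -/
def wtF {α : Type*} [Inhabited α] (η : α → α → ℤ) (F F' : LForest α)
    (M : List (List ℕ × List ℕ)) : ℤ :=
  (M.map (fun pr =>
    η ((labelAt F pr.1).getD default) ((labelAt F' pr.2).getD default))).sum

/-- The set of achievable mapping weights; its greatest element is the forest
similarity `sim(F, F')`. -/
def simSetF {α : Type*} [Inhabited α] (η : α → α → ℤ) (F F' : LForest α) : Set ℤ :=
  {s | ∃ M, IsMappingF F F' M ∧ s = wtF η F F' M}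


/-!
Classify a mapping of `node a ts :: rest` against `node b us :: rest'` by the fate of the two
leftmost roots, both at address `[0]`. If the left root is unmatched, deleting it (its children
become roots) turns the mapping into one of `ts ++ rest` of the same weight, and every mapping of
`ts ++ rest` arises this way; symmetrically on the right. If both roots are matched, ancestry and
pre-order preservation force them to be matched with each other, and then every other pair lies
inside both first trees or outside both, so the mapping splits into a mapping of
`[node a ts], [node b us]` and one of `rest, rest'`. Thus the set of achievable weights is the
union of the three corresponding sets (the last one a pointwise sum), and the recurrence follows
by taking greatest elements. All transports of mappings go through address translations that
preserve labels, prefixes (ancestry) and the lexicographic (pre-)order.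
-/

open List Pointwise

theorem _root_.IsGreatest.add {G : Type*} [Add G] [Preorder G] [AddLeftMono G] [AddRightMono G]
    {s t : Set G} {a b : G} (hs : IsGreatest s a) (ht : IsGreatest t b) :
    IsGreatest (s + t) (a + b) :=
  ⟨Set.add_mem_add hs.1 ht.1, add_mem_upperBounds_add hs.2 ht.2⟩

section Compat

theorem Compat.symm {pp qq : List ℕ × List ℕ} (h : Compat pp qq) : Compat qq pp := by
  obtain ⟨h₁, h₂, hpre, hpre', hlex⟩ := h
  refine ⟨h₁.symm, h₂.symm, hpre', hpre, ?_⟩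
  simp only [List.lex_lt] at hlex ⊢
  rwa [← not_iff_not, not_lt, not_lt, h₁.le_iff_lt, h₂.le_iff_lt]

instance : Std.Symm Compat := ⟨fun _ _ h => h.symm⟩

theorem compat_swap_iff {pp qq : List ℕ × List ℕ} : Compat pp.swap qq.swap ↔ Compat pp qq := by
  simp only [Compat, Prod.fst_swap, Prod.snd_swap]
  tauto

theorem compat_cons_succ_cons_zero (i j : ℕ) (p q p' q' : List ℕ) :
    Compat ((i + 1) :: p, (j + 1) :: q) (0 :: p', 0 :: q') := by
  simp [Compat, cons_prefix_cons, cons_lex_cons_iff]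

theorem not_compat_root_root {x y : List ℕ} (hx : x ≠ []) (hy : y ≠ []) :
    ¬ Compat ([0], x) (y, [0]) := by
  obtain ⟨m, r, rfl⟩ := exists_cons_of_ne_nil hx
  obtain ⟨k, s, rfl⟩ := exists_cons_of_ne_nil hy
  rintro ⟨-, hne, hpre, -, hlex⟩
  simp only [cons_prefix_cons, prefix_nil, cons_lex_cons_iff, not_lex_nil] at *
  grind

end Compat

section Addresses

variable {α : Type*}

theorem labelAt_nil (F : LForest α) : labelAt F [] = none := by
  rw [labelAt]

theorem labelAt_nil_forest (p : List ℕ) : labelAt ([] : LForest α) p = none := by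
  cases p <;> simp [labelAt]

theorem IsNode.ne_nil {F : LForest α} {p : List ℕ} (h : IsNode F p) : p ≠ [] := by
  rintro rfl
  simp [IsNode, labelAt_nil] at h

theorem IsNode.head_lt_length {F : LForest α} {i : ℕ} {p : List ℕ} (h : IsNode F (i :: p)) :
    i < F.length := by
  by_contra hi
  simp [IsNode, labelAt, getElem?_eq_none (not_lt.1 hi)] at h

theorem IsNode.zero_prefix_of_singleton {t : LTree α} {p : List ℕ} (h : IsNode [t] p) :
    [0] <+: p := by
  obtain _ | ⟨_ | i, q⟩ := p
  · exact absurd rfl h.ne_nil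
  · simp
  · simp [IsNode, labelAt] at h

theorem labelAt_cons_succ (t : LTree α) (F : LForest α) (i : ℕ) (p : List ℕ) :
    labelAt (t :: F) ((i + 1) :: p) = labelAt F (i :: p) := by
  rw [labelAt, labelAt, getElem?_cons_succ]

theorem labelAt_node_cons_zero_cons (a : α) (ts F : LForest α) (i : ℕ) (p : List ℕ) :
    labelAt (.node a ts :: F) (0 :: i :: p) = labelAt ts (i :: p) := by
  rw [labelAt]
  simp

theorem labelAt_cons_zero (t : LTree α) (F : LForest α) (p : List ℕ) :
    labelAt (t :: F) (0 :: p) = labelAt [t] (0 :: p) := by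
  rw [labelAt, labelAt]
  simp

theorem labelAt_append_of_lt (ts F : LForest α) {i : ℕ} (hi : i < ts.length) (p : List ℕ) :
    labelAt (ts ++ F) (i :: p) = labelAt ts (i :: p) := by
  rw [labelAt, labelAt, getElem?_append_left hi]

theorem labelAt_append_of_le (ts F : LForest α) {i : ℕ} (hi : ts.length ≤ i) (p : List ℕ) :
    labelAt (ts ++ F) (i :: p) = labelAt F ((i - ts.length) :: p) := by
  rw [labelAt, labelAt, getElem?_append_right hi]

end Addresses

section Mapping

variable {α : Type*} {F F' : LForest α} {M : List (List ℕ × List ℕ)}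

theorem IsMappingF.sublist {N : List (List ℕ × List ℕ)} (hM : IsMappingF F F' M) (h : N <+ M) :
    IsMappingF F F' N :=
  ⟨fun pr hpr => hM.1 pr (h.subset hpr), hM.2.sublist h⟩

theorem IsMappingF.swap (hM : IsMappingF F F' M) : IsMappingF F' F (M.map Prod.swap) :=
  ⟨forall_mem_map.2 fun pr hpr => (hM.1 pr hpr).symm, pairwise_map.2 (hM.2.imp compat_swap_iff.2)⟩

theorem IsMappingF.root_pair_mem (hM : IsMappingF F F' M) {x y : List ℕ} (hx : ([0], x) ∈ M)
    (hy : (y, [0]) ∈ M) : ([0], [0]) ∈ M := by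
  by_cases hxy : ([0], x) = (y, [0])
  · simp_all
  · exact absurd (hM.2.forall hx hy hxy)
      (not_compat_root_root (hM.1 _ hx).2.ne_nil (hM.1 _ hy).1.ne_nil)

variable [Inhabited α] (η : α → α → ℤ)

theorem wtF_append (F F' : LForest α) (M N : List (List ℕ × List ℕ)) :
    wtF η F F' (M ++ N) = wtF η F F' M + wtF η F F' N := by
  simp [wtF]

theorem wtF_perm (F F' : LForest α) {M N : List (List ℕ × List ℕ)} (h : M.Perm N) :
    wtF η F F' M = wtF η F F' N :=
  (h.map _).sum_eq

theorem wtF_swap : wtF (flip η) F' F (M.map Prod.swap) = wtF η F F' M := by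
  simp [wtF, flip, Function.comp_def]

theorem simSetF_swap (F F' : LForest α) : simSetF (flip η) F' F = simSetF η F F' := by
  suffices h : ∀ (η : α → α → ℤ) (F F' : LForest α), simSetF η F F' ⊆ simSetF (flip η) F' F from
    (h _ _ _).antisymm (h η F F')
  rintro η F F' _ ⟨M, hM, rfl⟩
  exact ⟨_, hM.swap, (wtF_swap η).symm⟩

end Mapping

section NodeEmbedding

variable {α : Type*}

structure NodeEmbedding (G F : LForest α) (P : List ℕ → Prop) (f : List ℕ → List ℕ) : Prop where
  labelAt_eq : ∀ p, P p → labelAt F (f p) = labelAt G p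
  prefix_iff : ∀ p q, P p → P q → (f p <+: f q ↔ p <+: q)
  lex_iff : ∀ p q, P p → P q → (Lex (· < ·) (f p) (f q) ↔ Lex (· < ·) p q)

variable {G F G' F' : LForest α} {P P' : List ℕ → Prop} {f g : List ℕ → List ℕ}

theorem NodeEmbedding.id_of_labelAt_eq (h : ∀ p, P p → labelAt F p = labelAt G p) :
    NodeEmbedding G F P id :=
  ⟨h, fun _ _ _ _ => Iff.rfl, fun _ _ _ _ => Iff.rfl⟩

theorem NodeEmbedding.refl (F : LForest α) : NodeEmbedding F F (fun _ => True) id :=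
  .id_of_labelAt_eq fun _ _ => rfl

theorem NodeEmbedding.of_rightInverse (hf : NodeEmbedding G F P f)
    (hg : ∀ p, P' p → P (g p) ∧ f (g p) = p) : NodeEmbedding F G P' g where
  labelAt_eq p hp := by rw [← hf.labelAt_eq _ (hg p hp).1, (hg p hp).2]
  prefix_iff p q hp hq := by
    rw [← hf.prefix_iff _ _ (hg p hp).1 (hg q hq).1, (hg p hp).2, (hg q hq).2]
  lex_iff p q hp hq := by
    rw [← hf.lex_iff _ _ (hg p hp).1 (hg q hq).1, (hg p hp).2, (hg q hq).2]

theorem NodeEmbedding.injOn (hf : NodeEmbedding G F P f) {p q : List ℕ} (hp : P p) (hq : P q)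
    (h : f p = f q) : p = q :=
  ((hf.prefix_iff p q hp hq).1 (h ▸ prefix_refl _)).eq_of_length <|
    le_antisymm ((hf.prefix_iff p q hp hq).1 (h ▸ prefix_refl _)).length_le
      ((hf.prefix_iff q p hq hp).1 (h ▸ prefix_refl _)).length_le

theorem NodeEmbedding.compat_map (hf : NodeEmbedding G F P f) (hg : NodeEmbedding G' F' P' g)
    {pp qq : List ℕ × List ℕ} (hp : P pp.1 ∧ P' pp.2) (hq : P qq.1 ∧ P' qq.2)
    (h : Compat pp qq) : Compat (Prod.map f g pp) (Prod.map f g qq) := by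
  obtain ⟨h₁, h₂, hpre, hpre', hlex⟩ := h
  refine ⟨mt (hf.injOn hp.1 hq.1) h₁, mt (hg.injOn hp.2 hq.2) h₂, ?_, ?_, ?_⟩
  · simpa only [Prod.map, hf.prefix_iff _ _ hp.1 hq.1, hg.prefix_iff _ _ hp.2 hq.2]
  · simpa only [Prod.map, hf.prefix_iff _ _ hq.1 hp.1, hg.prefix_iff _ _ hq.2 hp.2]
  · simpa only [Prod.map, hf.lex_iff _ _ hp.1 hq.1, hg.lex_iff _ _ hp.2 hq.2]

theorem IsMappingF.map (hf : NodeEmbedding G F P f) (hg : NodeEmbedding G' F' P' g)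
    {M : List (List ℕ × List ℕ)} (hM : IsMappingF G G' M) (hMP : ∀ pr ∈ M, P pr.1 ∧ P' pr.2) :
    IsMappingF F F' (M.map (Prod.map f g)) := by
  refine ⟨forall_mem_map.2 fun pr hpr => ?_, ?_⟩
  · simp only [Prod.map, IsNode, hf.labelAt_eq _ (hMP pr hpr).1, hg.labelAt_eq _ (hMP pr hpr).2]
    exact hM.1 pr hpr
  · exact pairwise_map.2 <| hM.2.imp_of_mem fun hp hq h =>
      hf.compat_map hg (hMP _ hp) (hMP _ hq) h

variable [Inhabited α] (η : α → α → ℤ)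

theorem wtF_map (hf : NodeEmbedding G F P f) (hg : NodeEmbedding G' F' P' g)
    {M : List (List ℕ × List ℕ)} (hMP : ∀ pr ∈ M, P pr.1 ∧ P' pr.2) :
    wtF η F F' (M.map (Prod.map f g)) = wtF η G G' M := by
  rw [wtF, wtF, map_map]
  congr 1
  refine map_congr_left fun pr hpr => ?_
  simp only [Function.comp_apply, Prod.map, hf.labelAt_eq _ (hMP pr hpr).1,
    hg.labelAt_eq _ (hMP pr hpr).2]

theorem wtF_mem_simSetF_of_nodeEmbedding (hf : NodeEmbedding G F P f)
    (hg : NodeEmbedding G' F' P' g) {M : List (List ℕ × List ℕ)} (hM : IsMappingF G G' M)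
    (hMP : ∀ pr ∈ M, P pr.1 ∧ P' pr.2) : wtF η G G' M ∈ simSetF η F F' :=
  ⟨_, hM.map hf hg hMP, (wtF_map η hf hg hMP).symm⟩

end NodeEmbedding

section Embeddings

variable {α : Type*}

/- With `n = ts.length`, `liftAddr n` reads an address of `ts ++ rest` in `node a ts :: rest`:
the first `n` roots move below the new root `[0]`. `lowerAddr n` undoes this away from `[0]`. -/
def liftAddr (n : ℕ) : List ℕ → List ℕ
  | [] => []
  | i :: p => if i < n then 0 :: i :: p else (i - n + 1) :: p

def lowerAddr (n : ℕ) : List ℕ → List ℕ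
  | [] => []
  | 0 :: p => p
  | (j + 1) :: p => (n + j) :: p

theorem nodeEmbedding_liftAddr (a : α) (ts rest : LForest α) :
    NodeEmbedding (ts ++ rest) (.node a ts :: rest) (· ≠ []) (liftAddr ts.length) where
  labelAt_eq
    | i :: p, _ => by
      by_cases hi : i < ts.length
      · rw [liftAddr, if_pos hi, labelAt_node_cons_zero_cons, labelAt_append_of_lt _ _ hi]
      · rw [liftAddr, if_neg hi, labelAt_cons_succ, labelAt_append_of_le _ _ (not_lt.1 hi)]
  prefix_iff
    | i :: p, j :: q, _, _ => by
      by_cases hi : i < ts.length <;> by_cases hj : j < ts.length <;>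
        simp only [liftAddr, hi, hj, if_true, if_false, cons_prefix_cons] <;> grind
  lex_iff
    | i :: p, j :: q, _, _ => by
      by_cases hi : i < ts.length <;> by_cases hj : j < ts.length <;>
        simp only [liftAddr, hi, hj, if_true, if_false, cons_lex_cons_iff] <;> grind

theorem nodeEmbedding_lowerAddr (a : α) (ts rest : LForest α) :
    NodeEmbedding (.node a ts :: rest) (ts ++ rest)
      (fun p => IsNode (.node a ts :: rest) p ∧ p ≠ [0]) (lowerAddr ts.length) :=
  (nodeEmbedding_liftAddr a ts rest).of_rightInverse fun
    | [], ⟨h, _⟩ => absurd rfl h.ne_nil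
    | [0], ⟨_, h⟩ => absurd rfl h
    | 0 :: i :: p, ⟨h, _⟩ => by
      rw [IsNode, labelAt_node_cons_zero_cons] at h
      simp [lowerAddr, liftAddr, IsNode.head_lt_length h]
    | (j + 1) :: p, _ => by simp [lowerAddr, liftAddr]

theorem nodeEmbedding_succHead (t : LTree α) (rest : LForest α) :
    NodeEmbedding rest (t :: rest) (· ≠ []) (modifyHead (· + 1)) where
  labelAt_eq
    | i :: p, _ => labelAt_cons_succ t rest i p
  prefix_iff
    | i :: p, j :: q, _, _ => by simp [cons_prefix_cons]
  lex_iff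
    | i :: p, j :: q, _, _ => by simp [cons_lex_cons_iff]

theorem nodeEmbedding_predHead (t : LTree α) (rest : LForest α) :
    NodeEmbedding (t :: rest) rest (fun p => p ≠ [] ∧ ¬ [0] <+: p) (modifyHead (· - 1)) :=
  (nodeEmbedding_succHead t rest).of_rightInverse fun
    | [], ⟨h, _⟩ => absurd rfl h
    | 0 :: p, ⟨_, h⟩ => absurd (by simp) h
    | (j + 1) :: p, _ => by simp

theorem nodeEmbedding_singleton_cons (t : LTree α) (rest : LForest α) :
    NodeEmbedding [t] (t :: rest) ([0] <+: ·) id :=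
  .id_of_labelAt_eq fun
    | 0 :: p, _ => labelAt_cons_zero t rest p

theorem nodeEmbedding_cons_singleton (t : LTree α) (rest : LForest α) :
    NodeEmbedding (t :: rest) [t] ([0] <+: ·) id :=
  .id_of_labelAt_eq fun
    | 0 :: p, _ => (labelAt_cons_zero t rest p).symm

end Embeddings

section Decomposition

variable {α : Type*} [Inhabited α] (η : α → α → ℤ)

theorem simSetF_append_subset (a : α) (ts rest F' : LForest α) :
    simSetF η (ts ++ rest) F' ⊆ simSetF η (.node a ts :: rest) F' := by
  rintro _ ⟨M, hM, rfl⟩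
  exact wtF_mem_simSetF_of_nodeEmbedding η (nodeEmbedding_liftAddr a ts rest)
    (.refl F') hM fun pr hpr => ⟨(hM.1 pr hpr).1.ne_nil, trivial⟩

theorem wtF_mem_simSetF_append {a : α} {ts rest F' : LForest α} {M : List (List ℕ × List ℕ)}
    (hM : IsMappingF (.node a ts :: rest) F' M) (hroot : ∀ pr ∈ M, pr.1 ≠ [0]) :
    wtF η (.node a ts :: rest) F' M ∈ simSetF η (ts ++ rest) F' :=
  wtF_mem_simSetF_of_nodeEmbedding η (nodeEmbedding_lowerAddr a ts rest) (.refl F') hM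
    fun pr hpr => ⟨⟨(hM.1 pr hpr).1, hroot pr hpr⟩, trivial⟩

theorem add_subset_simSetF_cons (t t' : LTree α) (rest rest' : LForest α) :
    simSetF η rest rest' + simSetF η [t] [t'] ⊆ simSetF η (t :: rest) (t' :: rest') := by
  rintro _ ⟨_, ⟨M, hM, rfl⟩, _, ⟨N, hN, rfl⟩, rfl⟩
  have hMP : ∀ pr ∈ M, pr.1 ≠ [] ∧ pr.2 ≠ [] :=
    fun pr hpr => ⟨(hM.1 pr hpr).1.ne_nil, (hM.1 pr hpr).2.ne_nil⟩
  have hNP : ∀ pr ∈ N, [0] <+: pr.1 ∧ [0] <+: pr.2 := fun pr hpr =>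
    ⟨(hN.1 pr hpr).1.zero_prefix_of_singleton, (hN.1 pr hpr).2.zero_prefix_of_singleton⟩
  have hM' := hM.map (nodeEmbedding_succHead t rest) (nodeEmbedding_succHead t' rest') hMP
  have hN' :=
    hN.map (nodeEmbedding_singleton_cons t rest) (nodeEmbedding_singleton_cons t' rest') hNP
  refine ⟨_ ++ _, ⟨fun pr hpr => (mem_append.1 hpr).elim (hM'.1 pr) (hN'.1 pr), ?_⟩, ?_⟩
  · refine pairwise_append.2 ⟨hM'.2, hN'.2, ?_⟩
    simp only [mem_map, Prod.map, forall_exists_index, and_imp]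
    rintro _ ⟨_ | ⟨i, p⟩, _ | ⟨j, q⟩⟩ hpr rfl _ qr hqr rfl
    · exact absurd rfl (hMP _ hpr).1
    · exact absurd rfl (hMP _ hpr).1
    · exact absurd rfl (hMP _ hpr).2
    obtain ⟨⟨p', hp'⟩, ⟨q', hq'⟩⟩ := hNP qr hqr
    rw [← hp', ← hq']
    exact compat_cons_succ_cons_zero i j p q p' q'
  · rw [wtF_append, wtF_map η (nodeEmbedding_succHead t rest) (nodeEmbedding_succHead t' rest') hMP,
      wtF_map η (nodeEmbedding_singleton_cons t rest) (nodeEmbedding_singleton_cons t' rest') hNP]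

theorem wtF_mem_add_of_root_pair_mem {t t' : LTree α} {rest rest' : LForest α}
    {M : List (List ℕ × List ℕ)} (hM : IsMappingF (t :: rest) (t' :: rest') M)
    (hroot : ([0], [0]) ∈ M) :
    wtF η (t :: rest) (t' :: rest') M ∈ simSetF η rest rest' + simSetF η [t] [t'] := by
  have hiff : ∀ pr ∈ M, ([0] <+: pr.1 ↔ [0] <+: pr.2) := fun pr hpr => by
    rcases eq_or_ne ([0], [0]) pr with rfl | hne
    · exact Iff.rfl
    · exact (hM.2.forall hroot hpr hne).2.2.1
  rw [← wtF_perm η _ _ (filter_append_perm (fun pr => [0] <+: pr.1) M), wtF_append,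
    add_comm (wtF η _ _ _)]
  refine Set.add_mem_add (wtF_mem_simSetF_of_nodeEmbedding η (nodeEmbedding_predHead t rest)
    (nodeEmbedding_predHead t' rest') (hM.sublist filter_sublist) fun pr hpr => ?_)
    (wtF_mem_simSetF_of_nodeEmbedding η (nodeEmbedding_cons_singleton t rest)
    (nodeEmbedding_cons_singleton t' rest') (hM.sublist filter_sublist) fun pr hpr => ?_)
  · obtain ⟨hpr, hout⟩ := mem_filter.1 hpr
    simp only [Bool.not_eq_true', decide_eq_false_iff_not] at hout
    exact ⟨⟨(hM.1 pr hpr).1.ne_nil, hout⟩, (hM.1 pr hpr).2.ne_nil, (hiff pr hpr).not.1 hout⟩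
  · obtain ⟨hpr, hin⟩ := mem_filter.1 hpr
    simp only [decide_eq_true_eq] at hin
    exact ⟨hin, (hiff pr hpr).1 hin⟩

theorem simSetF_cons_cons (a : α) (ts rest : LForest α) (b : α) (us rest' : LForest α) :
    simSetF η (.node a ts :: rest) (.node b us :: rest') =
      simSetF η (ts ++ rest) (.node b us :: rest') ∪
        (simSetF η (.node a ts :: rest) (us ++ rest') ∪
          (simSetF η rest rest' + simSetF η [.node a ts] [.node b us])) := by
  refine subset_antisymm ?_ (Set.union_subset (simSetF_append_subset η a ts rest _)
    (Set.union_subset ?_ (add_subset_simSetF_cons η _ _ rest rest')))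
  · rintro _ ⟨M, hM, rfl⟩
    by_cases hleft : ∀ pr ∈ M, pr.1 ≠ [0]
    · exact Or.inl (wtF_mem_simSetF_append η hM hleft)
    by_cases hright : ∀ pr ∈ M, pr.2 ≠ [0]
    · refine Or.inr (Or.inl ?_)
      rw [← simSetF_swap, ← wtF_swap]
      exact wtF_mem_simSetF_append (flip η) hM.swap (forall_mem_map.2 hright)
    push Not at hleft hright
    obtain ⟨⟨_, x⟩, hx, rfl⟩ := hleft
    obtain ⟨⟨y, _⟩, hy, rfl⟩ := hright
    exact Or.inr (Or.inr (wtF_mem_add_of_root_pair_mem η hM (hM.root_pair_mem hx hy)))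
  · rw [← simSetF_swap η, ← simSetF_swap η (.node a ts :: rest)]
    exact simSetF_append_subset _ b us rest' _

theorem simSetF_nil_left (F' : LForest α) : simSetF η [] F' = {0} := by
  refine Set.eq_singleton_iff_unique_mem.2 ⟨⟨[], ⟨by simp, .nil⟩, rfl⟩, ?_⟩
  rintro _ ⟨_ | ⟨pr, M⟩, hM, rfl⟩
  · rfl
  · simpa [IsNode, labelAt_nil_forest] using (hM.1 pr mem_cons_self).1

theorem simSetF_nil_right (F : LForest α) : simSetF η F [] = {0} := by
  rw [← simSetF_swap, simSetF_nil_left]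

end Decomposition

/-- Shasha–Zhang recurrence for forest similarity:
`sim(F, F') = 0` if `F` or `F'` is empty, and otherwise, with `v₁, v₁'` the
first pre-order nodes (the leftmost roots),
`sim(F, F') = max { sim(F∖v₁, F'), sim(F, F'∖v₁'), sim(F∖sub(v₁), F'∖sub(v₁')) + sim(sub(v₁), sub(v₁')) }`. -/
theorem stmt12 {α : Type*} [Inhabited α] (η : α → α → ℤ) :
    (∀ (F F' : LForest α) (S : ℤ), (F = [] ∨ F' = []) →
        IsGreatest (simSetF η F F') S → S = 0) ∧
    (∀ (a : α) (ts rest : LForest α) (b : α) (us rest' : LForest α)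
        (S S₁ S₂ S₃ S₄ : ℤ),
        IsGreatest (simSetF η (.node a ts :: rest) (.node b us :: rest')) S →
        IsGreatest (simSetF η (ts ++ rest) (.node b us :: rest')) S₁ →
        IsGreatest (simSetF η (.node a ts :: rest) (us ++ rest')) S₂ →
        IsGreatest (simSetF η rest rest') S₃ →
        IsGreatest (simSetF η [.node a ts] [.node b us]) S₄ →
        S = max S₁ (max S₂ (S₃ + S₄))) := by
  refine ⟨?_, ?_⟩
  · rintro F F' S (rfl | rfl) hS
    · exact hS.unique (simSetF_nil_left η F' ▸ isGreatest_singleton)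
    · exact hS.unique (simSetF_nil_right η F ▸ isGreatest_singleton)
  · intro a ts rest b us rest' S S₁ S₂ S₃ S₄ hS hS₁ hS₂ hS₃ hS₄
    rw [simSetF_cons_cons] at hS
    exact hS.unique (hS₁.union (hS₂.union (hS₃.add hS₄)))

end Stmt12
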